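/- Let n ≥ 4 be an integer and let t* ∈ (0,1) be a critical point of g_n, i.e., g_n'(t*) = −((4n−4)/(4n−1))·(2t*−1)^{2n−3} + (t*)^{2n−3}·(−(2n−2) + (2n−1)t*) = 0. Then g_n(t*) > (4n−13)/(4(n−1)(4n−1)²); in particular g_n(t*) > 0. -/

import Mathlib

/-!
Write `m = 2n - 3`. At a critical point the relation `g_n'(t) = 0` expresses `(2t - 1)^{2n-2}`
through `t^m`, and substituting it turns `g_n(t)` into
`4/(4n-1)² + 1/(4n-1) - Q/(4(n-1))` with `Q = t^m (2t² - (m+2)t + (m+1))`;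
the constant part is exactly `(4n-13)/(4(n-1)(4n-1)²) + 1/(4(n-1))`. So everything reduces to
`Q < 1`, which holds because `Q = t^m (1 + m(1-t)) - 2t^{m+1}(1-t)` and `t^m (1 + m(1-t)) ≤ 1`
on `[0,1]`.
-/

noncomputable def gFun (n : ℕ) (t : ℝ) : ℝ :=
  4 / (4 * (n : ℝ) - 1) ^ 2 + (1 - (2 * t - 1) ^ (2 * n - 2)) / (4 * (n : ℝ) - 1)
    - (1 - t) * t ^ (2 * n - 2)

theorem pow_mul_one_add_mul_one_sub_le_one {R : Type*} [CommRing R] [LinearOrder R]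
    [IsStrictOrderedRing R] (m : ℕ) {t : R} (h0 : 0 ≤ t) (h1 : t ≤ 1) :
    t ^ m * (1 + m * (1 - t)) ≤ 1 := by
  induction m with
  | zero => simp
  | succ m ih =>
    have hpow : t ^ (m + 1) ≤ 1 := pow_le_one₀ h0 h1
    calc t ^ (m + 1) * (1 + ↑(m + 1) * (1 - t))
        = t * (t ^ m * (1 + m * (1 - t))) + t ^ (m + 1) * (1 - t) := by push_cast; ring
      _ ≤ t * 1 + 1 * (1 - t) := by gcongr
      _ = 1 := by ring

theorem pow_mul_quadratic_lt_one {R : Type*} [CommRing R] [LinearOrder R]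
    [IsStrictOrderedRing R] (m : ℕ) {t : R} (h0 : 0 < t) (h1 : t < 1) :
    t ^ m * (2 * t ^ 2 - (m + 2) * t + (m + 1)) < 1 := by
  have hpos : 0 < t ^ (m + 1) * (1 - t) := mul_pos (pow_pos h0 _) (by linarith)
  calc t ^ m * (2 * t ^ 2 - (m + 2) * t + (m + 1))
      = t ^ m * (1 + m * (1 - t)) - 2 * (t ^ (m + 1) * (1 - t)) := by ring
    _ < t ^ m * (1 + m * (1 - t)) := by linarith
    _ ≤ 1 := pow_mul_one_add_mul_one_sub_le_one m h0.le h1.le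

theorem gFun_sub_eq_of_critical (n : ℕ) (hn : 2 ≤ n) (t : ℝ)
    (hcrit : -((4 * (n : ℝ) - 4) / (4 * (n : ℝ) - 1)) * (2 * t - 1) ^ (2 * n - 3)
        + t ^ (2 * n - 3) * (-(2 * (n : ℝ) - 2) + (2 * (n : ℝ) - 1) * t) = 0) :
    gFun n t - (4 * (n : ℝ) - 13) / (4 * ((n : ℝ) - 1) * (4 * (n : ℝ) - 1) ^ 2)
      = (1 - t ^ (2 * n - 3) * (2 * t ^ 2 - (2 * n - 1) * t + (2 * n - 2)))
          / (4 * ((n : ℝ) - 1)) := by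
  have hn' : (2 : ℝ) ≤ n := by exact_mod_cast hn
  have hN : 4 * (n : ℝ) - 1 ≠ 0 := by linarith
  have hn1 : (n : ℝ) - 1 ≠ 0 := by linarith
  have hexp : 2 * n - 2 = 2 * n - 3 + 1 := by omega
  rw [gFun, hexp, pow_succ, pow_succ]
  field_simp at hcrit ⊢
  linear_combination (4 * (n : ℝ) - 1) * (2 * t - 1) * hcrit

/-- For `n ≥ 4` and a critical point `t* ∈ (0,1)` of `g_n`, i.e.
`g_n'(t*) = -((4n-4)/(4n-1))·(2t*-1)^{2n-3} + (t*)^{2n-3}·(-(2n-2) + (2n-1)t*) = 0`,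
one has `g_n(t*) > (4n-13)/(4(n-1)(4n-1)²)`; in particular `g_n(t*) > 0`. -/
theorem gFun_pos_at_critical (n : ℕ) (hn : 4 ≤ n) (t : ℝ) (ht : t ∈ Set.Ioo (0 : ℝ) 1)
    (hcrit : -((4 * (n : ℝ) - 4) / (4 * (n : ℝ) - 1)) * (2 * t - 1) ^ (2 * n - 3)
        + t ^ (2 * n - 3) * (-(2 * (n : ℝ) - 2) + (2 * (n : ℝ) - 1) * t) = 0) :
    gFun n t > (4 * (n : ℝ) - 13) / (4 * ((n : ℝ) - 1) * (4 * (n : ℝ) - 1) ^ 2) ∧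
      gFun n t > 0 := by
  have hn' : (4 : ℝ) ≤ n := by exact_mod_cast hn
  have hm : ((2 * n - 3 : ℕ) : ℝ) = 2 * n - 3 := by
    rw [Nat.cast_sub (by omega)]; push_cast; ring
  have hQ := pow_mul_quadratic_lt_one (2 * n - 3) ht.1 ht.2
  rw [hm] at hQ
  have hgap :
      0 < gFun n t - (4 * (n : ℝ) - 13) / (4 * ((n : ℝ) - 1) * (4 * (n : ℝ) - 1) ^ 2) := by
    rw [gFun_sub_eq_of_critical n (by omega) t hcrit]
    apply div_pos <;> linarith
  have hbound : 0 < (4 * (n : ℝ) - 13) / (4 * ((n : ℝ) - 1) * (4 * (n : ℝ) - 1) ^ 2) := by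
    have hN : 0 < 4 * (n : ℝ) - 1 := by linarith
    exact div_pos (by linarith) (mul_pos (by linarith) (pow_pos hN 2))
  exact ⟨by linarith, by linarith⟩
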